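/- arXiv:1701.04258 — 2 statements merged into one kernel-verified Lean document; each statement's English description precedes it below -/
import Mathlib

section
/- Quantitative congruence-sum estimate (core of Lemma 3.2). Let s > 1 be real, let m ≥ 2 and q ≥ 1 be integers, and let k, ℓ ≥ 0 be integers. Then 0 ≤ Σ_{(n₁,n₂) ∈ ℕ² : n₁,n₂ ≥ 1, n₁·m^k ≡ n₂·m^ℓ (mod q)} (n₁ n₂)^{-s} − ζ(2s)·m^{-s·|k-ℓ|} ≤ (m^{s·k} + m^{s·ℓ}) · ζ(s)² / q^s, where ζ is the Riemann zeta function. -/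
set_option maxHeartbeats 1000000

/-- The Riemann zeta function `ζ(s) = Σ_{n ≥ 1} n^{-s}` for real `s > 1`
(the `n = 0` term vanishes since `(0:ℝ)^(-s) = 0`). -/
noncomputable def zetaR (s : ℝ) : ℝ := ∑' n : ℕ, (n : ℝ) ^ (-s)

open Real Function Set

private lemma zetaR_def (s : ℝ) : zetaR s = ∑' n : ℕ, (n : ℝ) ^ (-s) := rfl

private lemma sumG {s : ℝ} (hs : 1 < s) : Summable (fun n : ℕ => (n : ℝ) ^ (-s)) :=
  Real.summable_nat_rpow.mpr (by linarith)

private lemma Gnn {s : ℝ} : ∀ n : ℕ, (0:ℝ) ≤ (n : ℝ) ^ (-s) :=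
  fun n => rpow_nonneg n.cast_nonneg _

/-- The product summand. -/
private noncomputable def G (s : ℝ) (p : ℕ × ℕ) : ℝ := (p.1 : ℝ) ^ (-s) * (p.2 : ℝ) ^ (-s)

private lemma G_nonneg {s : ℝ} (p : ℕ × ℕ) : 0 ≤ G s p :=
  mul_nonneg (Gnn _) (Gnn _)

private lemma sumG2 {s : ℝ} (hs : 1 < s) : Summable (G s) :=
  (sumG hs).mul_of_nonneg (sumG hs) Gnn Gnn

private lemma tsumG2 {s : ℝ} (hs : 1 < s) : ∑' p : ℕ × ℕ, G s p = zetaR s ^ 2 := by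
  have hsum : Summable (fun p : ℕ × ℕ => (p.1 : ℝ) ^ (-s) * (p.2 : ℝ) ^ (-s)) := sumG2 hs
  have hrow : ∀ b : ℕ, Summable (fun c : ℕ => (b : ℝ) ^ (-s) * (c : ℝ) ^ (-s)) :=
    fun b => (sumG hs).mul_left _
  have h1 : ∑' p : ℕ × ℕ, (p.1 : ℝ) ^ (-s) * (p.2 : ℝ) ^ (-s)
      = ∑' (b : ℕ) (c : ℕ), (b : ℝ) ^ (-s) * (c : ℝ) ^ (-s) :=
    Summable.tsum_prod' hsum hrow
  show ∑' p : ℕ × ℕ, (p.1 : ℝ) ^ (-s) * (p.2 : ℝ) ^ (-s) = zetaR s ^ 2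
  rw [h1]
  simp_rw [tsum_mul_left]
  rw [tsum_mul_right, zetaR_def, sq]

private lemma G_eq {s : ℝ} (p : ℕ × ℕ) : ((p.1 * p.2 : ℕ) : ℝ) ^ (-s) = G s p := by
  rw [G, Nat.cast_mul, Real.mul_rpow (Nat.cast_nonneg _) (Nat.cast_nonneg _)]

/-- Full condition set. -/
private def Cs (m q k l : ℕ) : Set (ℕ × ℕ) :=
  {p | 1 ≤ p.1 ∧ 1 ≤ p.2 ∧ ((p.1 * m ^ k : ℕ) : ZMod q) = ((p.2 * m ^ l : ℕ) : ZMod q)}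

private def Ds (m q k l : ℕ) : Set (ℕ × ℕ) := {p | p ∈ Cs m q k l ∧ p.1 * m ^ k = p.2 * m ^ l}

private def As (m q k l : ℕ) : Set (ℕ × ℕ) := {p | p ∈ Cs m q k l ∧ p.2 * m ^ l < p.1 * m ^ k}

private def Bs (m q k l : ℕ) : Set (ℕ × ℕ) := {p | p ∈ Cs m q k l ∧ p.1 * m ^ k < p.2 * m ^ l}

private lemma indicator_split {s : ℝ} (m q k l : ℕ) (p : ℕ × ℕ) :
    (Cs m q k l).indicator (G s) p =
      (Ds m q k l).indicator (G s) p + (As m q k l).indicator (G s) p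
        + (Bs m q k l).indicator (G s) p := by
  by_cases hC : p ∈ Cs m q k l
  · rcases lt_trichotomy (p.1 * m ^ k) (p.2 * m ^ l) with h | h | h
    · rw [indicator_of_mem hC, indicator_of_mem (show p ∈ Bs m q k l from ⟨hC, h⟩),
        indicator_of_notMem (fun hx : p ∈ Ds m q k l => absurd hx.2 h.ne),
        indicator_of_notMem (fun hx : p ∈ As m q k l => absurd hx.2 (by omega))]
      ring
    · rw [indicator_of_mem hC, indicator_of_mem (show p ∈ Ds m q k l from ⟨hC, h⟩),
        indicator_of_notMem (fun hx : p ∈ As m q k l => absurd hx.2 (by omega)),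
        indicator_of_notMem (fun hx : p ∈ Bs m q k l => absurd hx.2 (by omega))]
      ring
    · rw [indicator_of_mem hC, indicator_of_mem (show p ∈ As m q k l from ⟨hC, h⟩),
        indicator_of_notMem (fun hx : p ∈ Ds m q k l => absurd hx.2 h.ne'),
        indicator_of_notMem (fun hx : p ∈ Bs m q k l => absurd hx.2 (by omega))]
      ring
  · rw [indicator_of_notMem hC,
      indicator_of_notMem (fun hx : p ∈ Ds m q k l => hC hx.1),
      indicator_of_notMem (fun hx : p ∈ As m q k l => hC hx.1),
      indicator_of_notMem (fun hx : p ∈ Bs m q k l => hC hx.1)]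
    ring

/-- Diagonal sum, assuming `l ≤ k`. -/
private lemma diag_tsum {s : ℝ} (hs : 1 < s) {m : ℕ} (hm : 2 ≤ m) (q : ℕ) {k l : ℕ}
    (hlk : l ≤ k) :
    ∑' p : ℕ × ℕ, (Ds m q k l).indicator (G s) p
      = zetaR (2 * s) * (m : ℝ) ^ (-(s * ((k : ℝ) - (l : ℝ)))) := by
  set d := k - l with hd
  have hmpos : 0 < m := by omega
  have hpow : m ^ d * m ^ l = m ^ k := pow_sub_mul_pow m hlk
  have hinj : Injective (fun n : ℕ => ((n, n * m ^ d) : ℕ × ℕ)) := by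
    intro a b h
    exact ((Prod.mk.injEq _ _ _ _).mp h).1
  have hsupp : support ((Ds m q k l).indicator (G s)) ⊆
      Set.range (fun n : ℕ => ((n, n * m ^ d) : ℕ × ℕ)) := by
    intro p hp
    have hpD : p ∈ Ds m q k l := by
      by_contra h
      exact hp (indicator_of_notMem h _)
    refine ⟨p.1, ?_⟩
    have h2 : p.1 * m ^ d * m ^ l = p.2 * m ^ l := by
      rw [mul_assoc, hpow]; exact hpD.2
    have h3 : p.1 * m ^ d = p.2 :=
      Nat.eq_of_mul_eq_mul_right (pow_pos hmpos l) h2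
    exact Prod.ext rfl h3
  rw [← hinj.tsum_eq hsupp]
  have hexp : ((m : ℝ) ^ d : ℝ) ^ (-s) = (m : ℝ) ^ (-(s * ((k : ℝ) - (l : ℝ)))) := by
    rw [← Real.rpow_natCast (m : ℝ) d, ← Real.rpow_mul (Nat.cast_nonneg m)]
    congr 1
    have : ((d : ℕ) : ℝ) = (k : ℝ) - (l : ℝ) := by
      rw [hd, Nat.cast_sub hlk]
    rw [this]; ring
  have key : ∀ n : ℕ, (Ds m q k l).indicator (G s) (n, n * m ^ d)
      = (n : ℝ) ^ (-(2 * s)) * (m : ℝ) ^ (-(s * ((k : ℝ) - (l : ℝ)))) := by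
    intro n
    rcases Nat.eq_zero_or_pos n with hn | hn
    · subst hn
      rw [indicator_of_notMem (fun hx : ((0 : ℕ), 0 * m ^ d) ∈ Ds m q k l =>
        absurd hx.1.1 (by norm_num)), Nat.cast_zero,
        Real.zero_rpow (ne_of_lt (by linarith)), zero_mul]
    · have hmem : ((n, n * m ^ d) : ℕ × ℕ) ∈ Ds m q k l := by
        have heq : n * m ^ k = n * m ^ d * m ^ l := by
          rw [mul_assoc, hpow]
        exact ⟨⟨hn, Nat.one_le_iff_ne_zero.mpr (by positivity),
          by rw [heq]⟩, heq⟩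
      rw [indicator_of_mem hmem, G]
      have hn0 : (0 : ℝ) < (n : ℝ) := by exact_mod_cast hn
      push_cast
      rw [Real.mul_rpow hn0.le (by positivity), hexp, ← mul_assoc,
        ← Real.rpow_add hn0]
      congr 2
      ring
  rw [tsum_congr key, tsum_mul_right, zetaR_def]

/-- Off-diagonal bound (no assumption on `k`, `l`). -/
private lemma offA_tsum {s : ℝ} (hs : 1 < s) {m q : ℕ} (hm : 2 ≤ m) (hq : 1 ≤ q)
    (k l : ℕ) :
    ∑' p : ℕ × ℕ, (As m q k l).indicator (G s) p
      ≤ (m : ℝ) ^ (s * k) * zetaR s ^ 2 / (q : ℝ) ^ s := by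
  rw [← tsum_subtype]
  set A := As m q k l
  have hkey : ∀ x : A, ∃ j : ℕ, 1 ≤ j ∧
      (x : ℕ × ℕ).1 * m ^ k = (x : ℕ × ℕ).2 * m ^ l + q * j ∧
      j = ((x : ℕ × ℕ).1 * m ^ k - (x : ℕ × ℕ).2 * m ^ l) / q := by
    rintro ⟨⟨n₁, n₂⟩, hxA⟩
    have hlt : n₂ * m ^ l < n₁ * m ^ k := hxA.2
    have hcong : ((n₁ * m ^ k : ℕ) : ZMod q) = ((n₂ * m ^ l : ℕ) : ZMod q) := hxA.1.2.2
    have hmod : n₁ * m ^ k ≡ n₂ * m ^ l [MOD q] :=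
      (ZMod.natCast_eq_natCast_iff _ _ _).mp hcong
    have hdvd : q ∣ n₁ * m ^ k - n₂ * m ^ l :=
      (Nat.modEq_iff_dvd' hlt.le).mp hmod.symm
    have hdm := Nat.div_mul_cancel hdvd
    show ∃ j : ℕ, 1 ≤ j ∧ n₁ * m ^ k = n₂ * m ^ l + q * j ∧
      j = (n₁ * m ^ k - n₂ * m ^ l) / q
    refine ⟨(n₁ * m ^ k - n₂ * m ^ l) / q, ?_, ?_, rfl⟩
    · rcases Nat.eq_zero_or_pos ((n₁ * m ^ k - n₂ * m ^ l) / q) with h0 | h0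
      · rw [h0, zero_mul] at hdm; omega
      · omega
    · rw [mul_comm q, hdm]
      omega
  let e : A → ℕ × ℕ := fun x =>
    (((x : ℕ × ℕ).1 * m ^ k - (x : ℕ × ℕ).2 * m ^ l) / q, (x : ℕ × ℕ).2)
  have hinj : Injective e := by
    rintro x y hxy
    obtain ⟨jx, hjx1, hjx2, hjx3⟩ := hkey x
    obtain ⟨jy, hjy1, hjy2, hjy3⟩ := hkey y
    change ((((x : ℕ × ℕ).1 * m ^ k - (x : ℕ × ℕ).2 * m ^ l) / q, (x : ℕ × ℕ).2) : ℕ × ℕ)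
      = ((((y : ℕ × ℕ).1 * m ^ k - (y : ℕ × ℕ).2 * m ^ l) / q, (y : ℕ × ℕ).2) : ℕ × ℕ) at hxy
    rw [Prod.mk.injEq] at hxy
    obtain ⟨hxy1, hxy2⟩ := hxy
    have h1 : jx = jy := by rw [hjx3, hjy3]; exact hxy1
    have h3 : (x : ℕ × ℕ).1 * m ^ k = (y : ℕ × ℕ).1 * m ^ k := by
      rw [hjx2, hjy2, h1, hxy2]
    have hmk : 0 < m ^ k := pow_pos (show 0 < m by omega) k
    have h4 : (x : ℕ × ℕ).1 = (y : ℕ × ℕ).1 := Nat.eq_of_mul_eq_mul_right hmk h3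
    exact Subtype.ext (Prod.ext h4 hxy2)
  let g : ℕ × ℕ → ℝ := fun r =>
    (m : ℝ) ^ (s * k) * ((r.1 : ℝ) ^ (-s) * (r.2 : ℝ) ^ (-s)) * ((q : ℝ) ^ s)⁻¹
  have hqpos : (0 : ℝ) < (q : ℝ) := by exact_mod_cast hq
  have hgnn : ∀ c, c ∉ Set.range e → 0 ≤ g c := by
    intro c _
    have : (0:ℝ) ≤ (m : ℝ) ^ (s * k) := rpow_nonneg (Nat.cast_nonneg m) _
    have : (0:ℝ) ≤ ((q : ℝ) ^ s)⁻¹ := by positivity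
    positivity
  have hbound : ∀ x : A, G s (x : ℕ × ℕ) ≤ g (e x) := by
    rintro ⟨⟨n₁, n₂⟩, hxA⟩
    obtain ⟨j, hj1, hj2, hj3⟩ := hkey ⟨(n₁, n₂), hxA⟩
    dsimp only at hj2 hj3
    show (n₁ : ℝ) ^ (-s) * (n₂ : ℝ) ^ (-s) ≤
      (m : ℝ) ^ (s * k) *
        (((((n₁ * m ^ k - n₂ * m ^ l) / q : ℕ) : ℝ)) ^ (-s) * (n₂ : ℝ) ^ (-s)) *
          ((q : ℝ) ^ s)⁻¹
    rw [← hj3]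
    have hjpos : (0 : ℝ) < (j : ℝ) := by exact_mod_cast hj1
    have hmk : (0 : ℝ) < ((m : ℝ) ^ k) := by positivity
    -- q * j ≤ n₁ * m ^ k
    have hle : (q : ℝ) * (j : ℝ) ≤ (n₁ : ℝ) * (m : ℝ) ^ k := by
      have : q * j ≤ n₁ * m ^ k := by omega
      exact_mod_cast this
    have h1 : ((n₁ : ℝ) * (m : ℝ) ^ k) ^ (-s) ≤ ((q : ℝ) * (j : ℝ)) ^ (-s) :=
      Real.rpow_le_rpow_of_nonpos (by positivity) hle (by linarith)
    rw [Real.mul_rpow (Nat.cast_nonneg n₁) hmk.le,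
        Real.mul_rpow hqpos.le hjpos.le] at h1
    -- n₁ ^ (-s) ≤ q^(-s) * j^(-s) * (m^k)^s
    have hMpos : (0 : ℝ) < ((m : ℝ) ^ k) ^ s := by positivity
    have h2 : (n₁ : ℝ) ^ (-s) ≤ (q : ℝ) ^ (-s) * (j : ℝ) ^ (-s) * ((m : ℝ) ^ k) ^ s := by
      have hMM : ((m : ℝ) ^ k) ^ (-s) * ((m : ℝ) ^ k) ^ s = 1 := by
        rw [← Real.rpow_add hmk]; simp
      calc (n₁ : ℝ) ^ (-s) = (n₁ : ℝ) ^ (-s) * (((m : ℝ) ^ k) ^ (-s) * ((m : ℝ) ^ k) ^ s) := by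
            rw [hMM, mul_one]
        _ = ((n₁ : ℝ) ^ (-s) * ((m : ℝ) ^ k) ^ (-s)) * ((m : ℝ) ^ k) ^ s := by ring
        _ ≤ ((q : ℝ) ^ (-s) * (j : ℝ) ^ (-s)) * ((m : ℝ) ^ k) ^ s :=
            mul_le_mul_of_nonneg_right h1 hMpos.le
        _ = (q : ℝ) ^ (-s) * (j : ℝ) ^ (-s) * ((m : ℝ) ^ k) ^ s := by ring
    have hMs : ((m : ℝ) ^ k) ^ s = (m : ℝ) ^ (s * k) := by
      rw [← Real.rpow_natCast (m : ℝ) k, ← Real.rpow_mul (Nat.cast_nonneg m)]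
      congr 1; ring
    have hqs : (q : ℝ) ^ (-s) = ((q : ℝ) ^ s)⁻¹ := by
      rw [Real.rpow_neg hqpos.le]
    rw [hMs, hqs] at h2
    calc (n₁ : ℝ) ^ (-s) * (n₂ : ℝ) ^ (-s)
        ≤ (((q : ℝ) ^ s)⁻¹ * (j : ℝ) ^ (-s) * (m : ℝ) ^ (s * k)) * (n₂ : ℝ) ^ (-s) :=
          mul_le_mul_of_nonneg_right h2 (Gnn n₂)
      _ = (m : ℝ) ^ (s * k) * ((j : ℝ) ^ (-s) * (n₂ : ℝ) ^ (-s)) * ((q : ℝ) ^ s)⁻¹ := by ring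
  have hsf : Summable (fun x : A => G s (x : ℕ × ℕ)) := (sumG2 hs).subtype A
  have hsg : Summable g := (((sumG2 hs).mul_left _).mul_right _)
  have := Summable.tsum_le_tsum_of_inj e hinj hgnn hbound hsf hsg
  refine le_trans this ?_
  have : ∑' r : ℕ × ℕ, g r
      = (m : ℝ) ^ (s * k) * zetaR s ^ 2 * ((q : ℝ) ^ s)⁻¹ := by
    show ∑' r : ℕ × ℕ, (m : ℝ) ^ (s * k) * ((r.1 : ℝ) ^ (-s) * (r.2 : ℝ) ^ (-s))
        * ((q : ℝ) ^ s)⁻¹ = _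
    simp_rw [tsum_mul_right, tsum_mul_left]
    rw [show (fun r : ℕ × ℕ => (r.1 : ℝ) ^ (-s) * (r.2 : ℝ) ^ (-s)) = G s from rfl, tsumG2 hs]
  rw [this, div_eq_mul_inv]

/-- `Bs k l` swaps to `As l k`. -/
private lemma offB_eq {s : ℝ} (m q k l : ℕ) :
    ∑' p : ℕ × ℕ, (Bs m q k l).indicator (G s) p
      = ∑' p : ℕ × ℕ, (As m q l k).indicator (G s) p := by
  rw [← (Equiv.prodComm ℕ ℕ).tsum_eq ((As m q l k).indicator (G s))]
  refine tsum_congr fun p => ?_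
  have hmem : p ∈ Bs m q k l ↔ (Equiv.prodComm ℕ ℕ) p ∈ As m q l k := by
    constructor
    · rintro ⟨⟨h1, h2, h3⟩, h4⟩; exact ⟨⟨h2, h1, h3.symm⟩, h4⟩
    · rintro ⟨⟨h1, h2, h3⟩, h4⟩; exact ⟨⟨h2, h1, h3.symm⟩, h4⟩
  have hGval : G s ((Equiv.prodComm ℕ ℕ) p) = G s p := by
    simp [G, mul_comm]
  by_cases h : p ∈ Bs m q k l
  · rw [indicator_of_mem h, indicator_of_mem (hmem.mp h), hGval]
  · rw [indicator_of_notMem h, indicator_of_notMem (fun hx => h (hmem.mpr hx))]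

/-- `Ds k l` swaps to `Ds l k`. -/
private lemma diag_swap {s : ℝ} (m q k l : ℕ) :
    ∑' p : ℕ × ℕ, (Ds m q k l).indicator (G s) p
      = ∑' p : ℕ × ℕ, (Ds m q l k).indicator (G s) p := by
  rw [← (Equiv.prodComm ℕ ℕ).tsum_eq ((Ds m q l k).indicator (G s))]
  refine tsum_congr fun p => ?_
  have hmem : p ∈ Ds m q k l ↔ (Equiv.prodComm ℕ ℕ) p ∈ Ds m q l k := by
    constructor
    · rintro ⟨⟨h1, h2, h3⟩, h4⟩; exact ⟨⟨h2, h1, h3.symm⟩, h4.symm⟩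
    · rintro ⟨⟨h1, h2, h3⟩, h4⟩; exact ⟨⟨h2, h1, h3.symm⟩, h4.symm⟩
  have hGval : G s ((Equiv.prodComm ℕ ℕ) p) = G s p := by
    simp [G, mul_comm]
  by_cases h : p ∈ Ds m q k l
  · rw [indicator_of_mem h, indicator_of_mem (hmem.mp h), hGval]
  · rw [indicator_of_notMem h, indicator_of_notMem (fun hx => h (hmem.mpr hx))]

/-- Diagonal sum, general. -/
private lemma diag_tsum' {s : ℝ} (hs : 1 < s) {m : ℕ} (hm : 2 ≤ m) (q : ℕ) (k l : ℕ) :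
    ∑' p : ℕ × ℕ, (Ds m q k l).indicator (G s) p
      = zetaR (2 * s) * (m : ℝ) ^ (-(s * |(k : ℝ) - (l : ℝ)|)) := by
  rcases le_total l k with hlk | hkl
  · rw [diag_tsum hs hm q hlk]
    congr 3
    rw [abs_of_nonneg (by simp [sub_nonneg]; exact_mod_cast hlk)]
  · rw [diag_swap, diag_tsum hs hm q hkl]
    congr 3
    rw [abs_of_nonpos (by simp [sub_nonpos]; exact_mod_cast hkl)]
    ring

/-- Quantitative congruence-sum estimate (core of Lemma 3.2):
`0 ≤ Σ_{n₁,n₂ ≥ 1, n₁ m^k ≡ n₂ m^ℓ (q)} (n₁n₂)^{-s} − ζ(2s) m^{-s|k-ℓ|}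
   ≤ (m^{sk} + m^{sℓ}) ζ(s)² / q^s`. -/
theorem congruence_sum_estimate (s : ℝ) (hs : 1 < s) (m : ℕ) (hm : 2 ≤ m)
    (q : ℕ) (hq : 1 ≤ q) (k l : ℕ) :
    0 ≤ (∑' n : ℕ × ℕ,
          (if 1 ≤ n.1 ∧ 1 ≤ n.2 ∧
              ((n.1 * m ^ k : ℕ) : ZMod q) = ((n.2 * m ^ l : ℕ) : ZMod q) then
            (((n.1 * n.2 : ℕ) : ℝ) ^ (-s)) else 0)) -
        zetaR (2 * s) * (m : ℝ) ^ (-(s * |(k : ℝ) - (l : ℝ)|)) ∧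
    (∑' n : ℕ × ℕ,
          (if 1 ≤ n.1 ∧ 1 ≤ n.2 ∧
              ((n.1 * m ^ k : ℕ) : ZMod q) = ((n.2 * m ^ l : ℕ) : ZMod q) then
            (((n.1 * n.2 : ℕ) : ℝ) ^ (-s)) else 0)) -
        zetaR (2 * s) * (m : ℝ) ^ (-(s * |(k : ℝ) - (l : ℝ)|)) ≤
      ((m : ℝ) ^ (s * k) + (m : ℝ) ^ (s * l)) * zetaR s ^ 2 / (q : ℝ) ^ s := by
  have hFeq : (fun n : ℕ × ℕ =>
      (if 1 ≤ n.1 ∧ 1 ≤ n.2 ∧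
          ((n.1 * m ^ k : ℕ) : ZMod q) = ((n.2 * m ^ l : ℕ) : ZMod q) then
        (((n.1 * n.2 : ℕ) : ℝ) ^ (-s)) else 0))
      = (Cs m q k l).indicator (G s) := by
    funext p
    by_cases h : 1 ≤ p.1 ∧ 1 ≤ p.2 ∧
        ((p.1 * m ^ k : ℕ) : ZMod q) = ((p.2 * m ^ l : ℕ) : ZMod q)
    · rw [if_pos h, indicator_of_mem (show p ∈ Cs m q k l from h), G_eq]
    · rw [if_neg h, indicator_of_notMem (show p ∉ Cs m q k l from h)]
  rw [hFeq]
  have hsD : Summable ((Ds m q k l).indicator (G s)) := (sumG2 hs).indicator _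
  have hsA : Summable ((As m q k l).indicator (G s)) := (sumG2 hs).indicator _
  have hsB : Summable ((Bs m q k l).indicator (G s)) := (sumG2 hs).indicator _
  have hsplit : ∑' p : ℕ × ℕ, (Cs m q k l).indicator (G s) p
      = (∑' p : ℕ × ℕ, (Ds m q k l).indicator (G s) p)
        + (∑' p : ℕ × ℕ, (As m q k l).indicator (G s) p)
        + (∑' p : ℕ × ℕ, (Bs m q k l).indicator (G s) p) := by
    rw [← Summable.tsum_add hsD hsA, ← Summable.tsum_add (hsD.add hsA) hsB]
    exact tsum_congr (indicator_split m q k l)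
  rw [hsplit, diag_tsum' hs hm q k l]
  have hAnn : 0 ≤ ∑' p : ℕ × ℕ, (As m q k l).indicator (G s) p :=
    tsum_nonneg fun p => indicator_nonneg (fun x _ => G_nonneg x) p
  have hBnn : 0 ≤ ∑' p : ℕ × ℕ, (Bs m q k l).indicator (G s) p :=
    tsum_nonneg fun p => indicator_nonneg (fun x _ => G_nonneg x) p
  have hA := offA_tsum hs hm hq k l
  have hB : ∑' p : ℕ × ℕ, (Bs m q k l).indicator (G s) p
      ≤ (m : ℝ) ^ (s * l) * zetaR s ^ 2 / (q : ℝ) ^ s := by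
    rw [offB_eq]; exact offA_tsum hs hm hq l k
  constructor
  · linarith
  · have : ((m : ℝ) ^ (s * k) + (m : ℝ) ^ (s * l)) * zetaR s ^ 2 / (q : ℝ) ^ s
        = (m : ℝ) ^ (s * k) * zetaR s ^ 2 / (q : ℝ) ^ s
          + (m : ℝ) ^ (s * l) * zetaR s ^ 2 / (q : ℝ) ^ s := by ring
    rw [this]
    linarith
end

section
/- Lemma 3.2 (speed of convergence of moments in the Wasserstein metric, explicit moment form). Let s > 1 be real, let k ≥ 2 be an integer, let m, ℓ ≥ 0 be integers, and let q ≥ 2 be an integer coprime to k. Then | E_{s,q}[χ(k)^m · conj(χ(k))^ℓ] − k^{-s·|m-ℓ|} | ≤ (k^{s·m} + k^{s·ℓ} + 2) · ζ(s)² / q^s, where E_{s,q}[χ(k)^m · conj(χ(k))^ℓ] = (Σ_χ |L(s,χ)|² χ(k)^m conj(χ(k))^ℓ) / (Σ_χ |L(s,χ)|²), the sums running over all Dirichlet characters χ mod q, and ζ is the Riemann zeta function. -/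
/-!
Expanding `|L(s,χ)|²` as a double series and summing over `χ` with the orthogonality relations
turns the numerator into `φ(q) ∑ a^{-s} b^{-s}` over the pairs with `a k^m ≡ b k^ℓ` a unit
mod `q`; the denominator is the case `m = ℓ = 0`. For `ℓ ≤ m` the pairs with `a k^m = b k^ℓ`
are exactly `b = a k^{m-ℓ}`, and they contribute `k^{-s(m-ℓ)} S` with
`S = ∑_{(a,q)=1} a^{-2s} ≥ 1`. For any other pair, say with `b d < a c` where `c = k^m` and
`d = k^ℓ`, the gap `a c - b d` is a positive multiple `j q`, so `a^{-s} ≤ c^s (j q)^{-s}`; since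
`(a, b) ↦ (b, j)` is injective, these pairs contribute at most `c^s ζ(s)² / q^s`. Finally
`(r S + X) / (S + Y)` lies within `X + Y` of `r` when `S ≥ 1` and `0 ≤ r ≤ 1`.
-/

open Filter MeasureTheory Complex Topology

/-- `L(s,χ) = Σ_{n ≥ 1} χ(n) n^{-s}` (the `n = 0` term vanishes since `(0:ℝ)^(-s) = 0`). -/
noncomputable def Lval (q : ℕ) (s : ℝ) (χ : DirichletCharacter ℂ q) : ℂ :=
  ∑' n : ℕ, χ (n : ZMod q) * (((n : ℝ) ^ (-s) : ℝ) : ℂ)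

open ComplexConjugate

namespace DirichletCharacter

theorem sum_apply_mul_conj_apply {q : ℕ} [NeZero q] (u v : ZMod q) :
    ∑ χ : DirichletCharacter ℂ q, χ u * conj (χ v) =
      if u = v ∧ IsUnit u then (q.totient : ℂ) else 0 := by
  have : NeZero ((Monoid.exponent (ZMod q)ˣ : ℕ) : ℂ) :=
    ⟨Nat.cast_ne_zero.mpr Monoid.exponent_ne_zero_of_finite⟩
  have hχ (χ : DirichletCharacter ℂ q) : χ u * conj (χ v) = χ (u * Ring.inverse v) := by
    rw [starRingEnd_apply, MulChar.star_apply', MulChar.inv_apply, map_mul]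
  simp only [hχ, sum_characters_eq]
  congr 1
  by_cases hv : IsUnit v
  · obtain ⟨w, rfl⟩ := hv
    simp only [Ring.inverse_unit, Units.mul_inv_eq_one, eq_iff_iff, iff_self_and]
    rintro rfl
    exact w.isUnit
  · rw [Ring.inverse_non_unit v hv, mul_zero, eq_iff_iff]
    refine ⟨fun h => (hv ?_).elim, fun ⟨huv, hu⟩ => (hv (huv ▸ hu)).elim⟩
    have := subsingleton_of_zero_eq_one h
    exact isUnit_of_subsingleton v

lemma norm_apply_mul_le {q : ℕ} (χ : DirichletCharacter ℂ q) (a : ZMod q) (z : ℂ) :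
    ‖χ a * z‖ ≤ ‖z‖ := by
  rw [norm_mul]
  exact mul_le_of_le_one_left (norm_nonneg z) (χ.norm_le_one a)

end DirichletCharacter

namespace LMeasure

variable {s : ℝ}

lemma natCast_mul_rpow_neg (s : ℝ) (a b : ℕ) :
    ((a * b : ℕ) : ℝ) ^ (-s) = (a : ℝ) ^ (-s) * (b : ℝ) ^ (-s) := by
  push_cast
  exact Real.mul_rpow (Nat.cast_nonneg a) (Nat.cast_nonneg b)

lemma natCast_pow_rpow (k m : ℕ) (t : ℝ) : ((k ^ m : ℕ) : ℝ) ^ t = (k : ℝ) ^ (t * m) := by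
  rw [Nat.cast_pow, mul_comm, Real.rpow_natCast_mul (Nat.cast_nonneg k)]

lemma rpow_neg_le_rpow_mul_rpow_neg {a c n : ℝ} (hs : 0 ≤ s) (hc : 0 < c) (hn : 0 < n)
    (hnac : n ≤ a * c) : a ^ (-s) ≤ c ^ s * n ^ (-s) := by
  have ha : 0 < a := pos_of_mul_pos_left (hn.trans_le hnac) hc.le
  calc a ^ (-s) = c ^ s * (a * c) ^ (-s) := by
        rw [Real.mul_rpow ha.le hc.le, Real.rpow_neg hc.le, mul_left_comm,
          mul_inv_cancel₀ (Real.rpow_pos_of_pos hc s).ne', mul_one]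
    _ ≤ c ^ s * n ^ (-s) := mul_le_mul_of_nonneg_left
        (Real.rpow_le_rpow_of_nonpos hn hnac (neg_nonpos.mpr hs)) (by positivity)

lemma abs_div_sub_le_of_le {S r X Y A B : ℝ} (hS : 1 ≤ S) (hr₀ : 0 ≤ r) (hr₁ : r ≤ 1)
    (hX₀ : 0 ≤ X) (hXA : X ≤ A) (hY₀ : 0 ≤ Y) (hYB : Y ≤ B) :
    |(r * S + X) / (S + Y) - r| ≤ A + B := by
  have hD : 1 ≤ S + Y := by linarith
  rw [show (r * S + X) / (S + Y) - r = (X - r * Y) / (S + Y) by field_simp; ring, abs_div,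
    abs_of_pos (by linarith : 0 < S + Y)]
  calc |X - r * Y| / (S + Y) ≤ |X - r * Y| := div_le_self (abs_nonneg _) hD
    _ ≤ A + B := by
      have hrY : r * Y ≤ Y := mul_le_of_le_one_left hY₀ hr₁
      have := mul_nonneg hr₀ hY₀
      exact abs_le.mpr ⟨by linarith, by linarith⟩

lemma summable_rpow_neg (hs : 1 < s) : Summable fun n : ℕ => (n : ℝ) ^ (-s) :=
  Real.summable_nat_rpow.mpr (neg_lt_neg hs)

noncomputable def pairWeight (s : ℝ) (p : ℕ × ℕ) : ℝ :=
  (p.1 : ℝ) ^ (-s) * (p.2 : ℝ) ^ (-s)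

lemma pairWeight_nonneg (s : ℝ) (p : ℕ × ℕ) : 0 ≤ pairWeight s p := by
  unfold pairWeight; positivity

lemma summable_pairWeight (hs : 1 < s) : Summable (pairWeight s) :=
  (summable_rpow_neg hs).mul_of_nonneg (summable_rpow_neg hs) (fun _ => by positivity)
    fun _ => by positivity

lemma summable_norm_apply_mul_rpow_neg (hs : 1 < s) {q : ℕ} (χ : DirichletCharacter ℂ q) :
    Summable fun n : ℕ => ‖χ n * (((n : ℝ) ^ (-s) : ℝ) : ℂ)‖ :=
  (summable_rpow_neg hs).of_nonneg_of_le (fun _ => norm_nonneg _) fun n => by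
    simpa [Complex.norm_real, abs_of_nonneg (Real.rpow_nonneg n.cast_nonneg _)] using
      χ.norm_apply_mul_le n (((n : ℝ) ^ (-s) : ℝ) : ℂ)

def congrPairs (q c d : ℕ) : Set (ℕ × ℕ) :=
  {p | ((p.1 * c : ℕ) : ZMod q) = ((p.2 * d : ℕ) : ZMod q) ∧
    IsUnit ((p.1 * c : ℕ) : ZMod q)}

noncomputable def congrSum (s : ℝ) (q c d : ℕ) : ℝ :=
  ∑' p, (congrPairs q c d).indicator (pairWeight s) p

lemma norm_sq_Lval_mul_apply_mul_conj (hs : 1 < s) {q : ℕ} (χ : DirichletCharacter ℂ q)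
    (c d : ℕ) :
    ((‖Lval q s χ‖ ^ 2 : ℝ) : ℂ) * χ c * conj (χ d) =
      ∑' p : ℕ × ℕ, (pairWeight s p : ℂ) * (χ ↑(p.1 * c) * conj (χ ↑(p.2 * d))) := by
  have hconj :
      conj (Lval q s χ) = ∑' n : ℕ, conj (χ n) * (((n : ℝ) ^ (-s) : ℝ) : ℂ) := by
    simp only [Lval, Complex.conj_tsum, map_mul, Complex.conj_ofReal]
  have hconj_summable :
      Summable fun n : ℕ => ‖conj (χ n) * (((n : ℝ) ^ (-s) : ℝ) : ℂ)‖ := by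
    simpa only [norm_mul, RCLike.norm_conj] using summable_norm_apply_mul_rpow_neg hs χ
  rw [Complex.ofReal_pow, ← Complex.mul_conj', hconj, Lval,
    tsum_mul_tsum_of_summable_norm (summable_norm_apply_mul_rpow_neg hs χ) hconj_summable,
    ← tsum_mul_right, ← tsum_mul_right]
  refine tsum_congr fun p => ?_
  simp only [pairWeight, Nat.cast_mul, map_mul, Complex.ofReal_mul]
  ring

lemma summable_pairWeight_mul_apply_mul_conj (hs : 1 < s) {q : ℕ}
    (χ : DirichletCharacter ℂ q) (c d : ℕ) :
    Summable fun p : ℕ × ℕ =>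
      (pairWeight s p : ℂ) * (χ ↑(p.1 * c) * conj (χ ↑(p.2 * d))) := by
  refine Summable.of_norm_bounded (summable_pairWeight hs) fun p => ?_
  rw [norm_mul, Complex.norm_real, Real.norm_of_nonneg (pairWeight_nonneg s p), norm_mul,
    RCLike.norm_conj]
  exact mul_le_of_le_one_right (pairWeight_nonneg s p)
    (mul_le_one₀ (χ.norm_le_one _) (norm_nonneg _) (χ.norm_le_one _))

theorem sum_norm_sq_Lval_mul_apply_mul_conj (hs : 1 < s) {q : ℕ} [NeZero q] (c d : ℕ) :
    ∑ χ : DirichletCharacter ℂ q, ((‖Lval q s χ‖ ^ 2 : ℝ) : ℂ) * χ c * conj (χ d) =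
      ((q.totient * congrSum s q c d : ℝ) : ℂ) := by
  simp only [norm_sq_Lval_mul_apply_mul_conj hs,
    ← Summable.tsum_finsetSum fun χ _ => summable_pairWeight_mul_apply_mul_conj hs χ c d,
    ← Finset.mul_sum, DirichletCharacter.sum_apply_mul_conj_apply, congrSum,
    Complex.ofReal_mul, Complex.ofReal_tsum, ← tsum_mul_left]
  refine tsum_congr fun p => ?_
  simp only [Set.indicator_apply, congrPairs, Set.mem_ofPred_eq]
  split_ifs <;> push_cast <;> ring

lemma pairWeight_swap (s : ℝ) (p : ℕ × ℕ) : pairWeight s p.swap = pairWeight s p :=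
  mul_comm _ _

lemma preimage_swap_congrPairs (q c d : ℕ) :
    Prod.swap ⁻¹' congrPairs q c d = congrPairs q d c := by
  ext p
  simp only [congrPairs, Set.mem_preimage, Set.mem_ofPred_eq, Prod.fst_swap, Prod.snd_swap]
  constructor <;> rintro ⟨h, hu⟩ <;> exact ⟨h.symm, h ▸ hu⟩

lemma congrSum_comm (s : ℝ) (q c d : ℕ) : congrSum s q c d = congrSum s q d c := by
  rw [congrSum, ← (Equiv.prodComm ℕ ℕ).tsum_eq]
  refine tsum_congr fun p => ?_
  rw [Equiv.prodComm_apply, ← Set.indicator_comp_right, preimage_swap_congrPairs]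
  exact congrArg (Set.indicator _ · p) (funext (pairWeight_swap s))

def diagPairs (c d : ℕ) : Set (ℕ × ℕ) := {p | p.1 * c = p.2 * d}

noncomputable def offDiagSum (s : ℝ) (q c d : ℕ) : ℝ :=
  ∑' p, (congrPairs q c d \ diagPairs c d).indicator (pairWeight s) p

lemma offDiagSum_nonneg (s : ℝ) (q c d : ℕ) : 0 ≤ offDiagSum s q c d :=
  tsum_nonneg fun p => Set.indicator_nonneg (fun p _ => pairWeight_nonneg s p) p

lemma congrSum_eq_add_offDiagSum (hs : 1 < s) (q c d : ℕ) :
    congrSum s q c d =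
      ∑' p, (congrPairs q c d ∩ diagPairs c d).indicator (pairWeight s) p +
        offDiagSum s q c d := by
  rw [congrSum, offDiagSum, ← Summable.tsum_add ((summable_pairWeight hs).indicator _)
    ((summable_pairWeight hs).indicator _),
    ← Set.inter_union_sdiff (congrPairs q c d) (diagPairs c d),
    Set.indicator_union_of_disjoint Set.disjoint_sdiff_inter.symm, Set.inter_union_sdiff]

noncomputable def unitSqSum (s : ℝ) (q : ℕ) : ℝ :=
  ∑' a : ℕ, {a : ℕ | IsUnit (a : ZMod q)}.indicator (fun a => pairWeight s (a, a)) a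

lemma one_le_unitSqSum (hs : 1 < s) (q : ℕ) : 1 ≤ unitSqSum s q := by
  have hsummable : Summable fun a : ℕ => pairWeight s (a, a) :=
    (summable_pairWeight hs).comp_injective fun a b h => congrArg Prod.fst h
  have h1 := (hsummable.indicator {a : ℕ | IsUnit (a : ZMod q)}).le_tsum 1
    fun a _ => Set.indicator_nonneg (fun a _ => pairWeight_nonneg s (a, a)) a
  simpa [unitSqSum, pairWeight] using h1

lemma tsum_indicator_congrPairs_inter_diagPairs {q e d : ℕ} (hd : 0 < d)
    (he : IsUnit (e : ZMod q)) (hdu : IsUnit (d : ZMod q)) :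
    ∑' p, (congrPairs q (e * d) d ∩ diagPairs (e * d) d).indicator (pairWeight s) p =
      (e : ℝ) ^ (-s) * unitSqSum s q := by
  have hsupp : Function.support ((congrPairs q (e * d) d ∩ diagPairs (e * d) d).indicator
      (pairWeight s)) ⊆
      Set.range fun a : ℕ => (a, a * e) := by
    rintro ⟨a, b⟩ hp
    have hdiag : a * (e * d) = b * d := (Set.mem_of_indicator_ne_zero hp).2
    have hb : b = a * e := Nat.eq_of_mul_eq_mul_right hd (by rw [← hdiag, mul_assoc])
    exact ⟨a, by rw [hb]⟩
  have hinj : Function.Injective fun a : ℕ => (a, a * e) := fun a b h => congrArg Prod.fst h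
  rw [← hinj.tsum_eq hsupp, unitSqSum, ← tsum_mul_left]
  refine tsum_congr fun a => ?_
  have hmem :
      (a, a * e) ∈ congrPairs q (e * d) d ∩ diagPairs (e * d) d ↔ IsUnit (a : ZMod q) := by
    simp [congrPairs, diagPairs, mul_assoc, IsUnit.mul_iff, he, hdu]
  by_cases ha : a ∈ {a : ℕ | IsUnit (a : ZMod q)}
  · rw [Set.indicator_of_mem (hmem.mpr ha), Set.indicator_of_mem ha]
    simp only [pairWeight, natCast_mul_rpow_neg]
    ring
  · rw [Set.indicator_of_notMem (mt hmem.mp ha), Set.indicator_of_notMem ha, mul_zero]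

lemma tsum_pairWeight (hs : 1 < s) : ∑' p, pairWeight s p = zetaR s ^ 2 := by
  rw [sq, zetaR, tsum_mul_tsum_of_summable_norm (summable_rpow_neg hs).norm
    (summable_rpow_neg hs).norm]
  rfl

def upperPairs (q c d : ℕ) : Set (ℕ × ℕ) :=
  {p | p.2 * d < p.1 * c ∧ ((p.1 * c : ℕ) : ZMod q) = ((p.2 * d : ℕ) : ZMod q)}

lemma tsum_indicator_upperPairs_le (hs : 1 < s) {q c : ℕ} (d : ℕ) (hq : 0 < q) (hc : 0 < c) :
    ∑' p, (upperPairs q c d).indicator (pairWeight s) p ≤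
      (c : ℝ) ^ s * (zetaR s ^ 2 / (q : ℝ) ^ s) := by
  let gap : upperPairs q c d → ℕ × ℕ := fun p => (p.1.2, (p.1.1 * c - p.1.2 * d) / q)
  have hgap (p : upperPairs q c d) :
      q * (gap p).2 = p.1.1 * c - p.1.2 * d ∧ 0 < (gap p).2 := by
    obtain ⟨hlt, hmod⟩ := p.2
    have hdvd : q ∣ p.1.1 * c - p.1.2 * d :=
      (Nat.modEq_iff_dvd' hlt.le).mp ((ZMod.natCast_eq_natCast_iff _ _ _).mp hmod).symm
    exact ⟨Nat.mul_div_cancel' hdvd, Nat.div_pos (Nat.le_of_dvd (by omega) hdvd) hq⟩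
  have hinj : Function.Injective gap := by
    rintro ⟨⟨a, b⟩, hab⟩ ⟨⟨a', b'⟩, hab'⟩ h
    obtain rfl : b = b' := congrArg Prod.fst h
    have hgap_eq : a * c - b * d = a' * c - b * d :=
      (hgap ⟨_, hab⟩).1.symm.trans ((congrArg (q * Prod.snd ·) h).trans (hgap ⟨_, hab'⟩).1)
    have hlt : b * d < a * c := hab.1
    have hlt' : b * d < a' * c := hab'.1
    have hac : a * c = a' * c := by omega
    exact Subtype.ext (Prod.ext (Nat.eq_of_mul_eq_mul_right hc hac) rfl)
  have hle (p : upperPairs q c d) :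
      pairWeight s p ≤ (c : ℝ) ^ s * (q : ℝ) ^ (-s) * pairWeight s (gap p) := by
    obtain ⟨hqj, hj⟩ := hgap p
    have hjq : ((gap p).2 * q : ℕ) ≤ p.1.1 * c := by rw [mul_comm, hqj]; omega
    have ha := rpow_neg_le_rpow_mul_rpow_neg (by linarith : 0 ≤ s)
      (a := (p.1.1 : ℝ))
      (Nat.cast_pos.mpr hc) (Nat.cast_pos.mpr (Nat.mul_pos hj hq)) (by exact_mod_cast hjq)
    rw [natCast_mul_rpow_neg] at ha
    calc pairWeight s p ≤ (c : ℝ) ^ s * ((((gap p).2 : ℝ) ^ (-s)) * (q : ℝ) ^ (-s)) *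
          (p.1.2 : ℝ) ^ (-s) :=
          mul_le_mul_of_nonneg_right ha (by positivity)
      _ = (c : ℝ) ^ s * (q : ℝ) ^ (-s) * pairWeight s (gap p) := by
          simp only [pairWeight, gap]; ring
  calc ∑' p, (upperPairs q c d).indicator (pairWeight s) p
      = ∑' p : upperPairs q c d, pairWeight s p := (tsum_subtype _ _).symm
    _ ≤ ∑' x, (c : ℝ) ^ s * (q : ℝ) ^ (-s) * pairWeight s x :=
        Summable.tsum_le_tsum_of_inj gap hinj
          (fun x _ => mul_nonneg (by positivity) (pairWeight_nonneg s x)) hle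
          ((summable_pairWeight hs).subtype _) ((summable_pairWeight hs).mul_left _)
    _ = (c : ℝ) ^ s * (zetaR s ^ 2 / (q : ℝ) ^ s) := by
        rw [tsum_mul_left, tsum_pairWeight hs, Real.rpow_neg (Nat.cast_nonneg q)]
        ring

lemma offDiagSum_le (hs : 1 < s) {q c d : ℕ} (hq : 0 < q) (hc : 0 < c) (hd : 0 < d) :
    offDiagSum s q c d ≤ ((c : ℝ) ^ s + (d : ℝ) ^ s) * (zetaR s ^ 2 / (q : ℝ) ^ s) := by
  have hsplit (p : ℕ × ℕ) : (congrPairs q c d \ diagPairs c d).indicator (pairWeight s) p ≤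
      (upperPairs q c d).indicator (pairWeight s) p +
        (upperPairs q d c).indicator (pairWeight s) p.swap := by
    by_cases hp : p ∈ congrPairs q c d \ diagPairs c d
    · rw [Set.indicator_of_mem hp]
      obtain ⟨⟨hmod, -⟩, hne : p.1 * c ≠ p.2 * d⟩ := hp
      rcases lt_or_gt_of_ne hne with hlt | hlt
      · rw [Set.indicator_of_mem (show p.swap ∈ upperPairs q d c from ⟨hlt, hmod.symm⟩),
          pairWeight_swap]
        exact le_add_of_nonneg_left (Set.indicator_nonneg (fun x _ => pairWeight_nonneg s x) p)
      · rw [Set.indicator_of_mem (show p ∈ upperPairs q c d from ⟨hlt, hmod⟩)]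
        exact le_add_of_nonneg_right
          (Set.indicator_nonneg (fun x _ => pairWeight_nonneg s x) p.swap)
    · rw [Set.indicator_of_notMem hp]
      exact add_nonneg (Set.indicator_nonneg (fun x _ => pairWeight_nonneg s x) p)
        (Set.indicator_nonneg (fun x _ => pairWeight_nonneg s x) p.swap)
  have hupper (c d : ℕ) : Summable ((upperPairs q c d).indicator (pairWeight s)) :=
    (summable_pairWeight hs).indicator _
  have hswap : Summable fun p : ℕ × ℕ => (upperPairs q d c).indicator (pairWeight s) p.swap :=
    (hupper d c).comp_injective Prod.swap_injective
  calc offDiagSum s q c d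
      ≤ ∑' p, ((upperPairs q c d).indicator (pairWeight s) p +
          (upperPairs q d c).indicator (pairWeight s) p.swap) :=
        Summable.tsum_le_tsum hsplit ((summable_pairWeight hs).indicator _)
          ((hupper c d).add hswap)
    _ = ∑' p, (upperPairs q c d).indicator (pairWeight s) p +
          ∑' p, (upperPairs q d c).indicator (pairWeight s) p := by
        rw [Summable.tsum_add (hupper c d) hswap]
        exact congrArg _ ((Equiv.prodComm ℕ ℕ).tsum_eq _)
    _ ≤ ((c : ℝ) ^ s + (d : ℝ) ^ s) * (zetaR s ^ 2 / (q : ℝ) ^ s) := by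
        rw [add_mul]
        exact add_le_add (tsum_indicator_upperPairs_le hs d hq hc)
          (tsum_indicator_upperPairs_le hs c hq hd)

lemma congrSum_mul_eq (hs : 1 < s) {q e d : ℕ} (hd : 0 < d) (he : IsUnit (e : ZMod q))
    (hdu : IsUnit (d : ZMod q)) :
    congrSum s q (e * d) d = (e : ℝ) ^ (-s) * unitSqSum s q + offDiagSum s q (e * d) d := by
  rw [congrSum_eq_add_offDiagSum hs, tsum_indicator_congrPairs_inter_diagPairs hd he hdu]

theorem abs_congrSum_div_sub_le (hs : 1 < s) {q k : ℕ} (hq : 0 < q) (hk : 0 < k)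
    (hcop : q.Coprime k) (m ℓ : ℕ) :
    |congrSum s q (k ^ m) (k ^ ℓ) / congrSum s q 1 1 - (k : ℝ) ^ (-(s * |(m : ℝ) - ℓ|))| ≤
      ((k : ℝ) ^ (s * m) + (k : ℝ) ^ (s * ℓ) + 2) * (zetaR s ^ 2 / (q : ℝ) ^ s) := by
  wlog hml : ℓ ≤ m generalizing m ℓ
  · rw [congrSum_comm, abs_sub_comm (m : ℝ), add_comm ((k : ℝ) ^ (s * m))]
    exact this ℓ m (by omega)
  obtain ⟨n, rfl⟩ := Nat.exists_eq_add_of_le hml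
  have hunit (j : ℕ) : IsUnit ((k ^ j : ℕ) : ZMod q) :=
    (ZMod.isUnit_iff_coprime _ _).mpr (hcop.symm.pow_left j)
  have hone : IsUnit ((1 : ℕ) : ZMod q) := by simp
  have h11 := congrSum_mul_eq hs one_pos hone hone (s := s)
  rw [one_mul, Nat.cast_one, Real.one_rpow, one_mul] at h11
  rw [pow_add, mul_comm, congrSum_mul_eq hs (pow_pos hk ℓ) (hunit n) (hunit ℓ), h11,
    natCast_pow_rpow, show (((ℓ + n : ℕ) : ℝ) - ℓ) = n by push_cast; ring,
    abs_of_nonneg (n.cast_nonneg : (0 : ℝ) ≤ n), neg_mul_eq_neg_mul]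
  have hr : (k : ℝ) ^ (-s * n) ≤ 1 :=
    Real.rpow_le_one_of_one_le_of_nonpos (by exact_mod_cast hk)
      (mul_nonpos_of_nonpos_of_nonneg (by linarith) n.cast_nonneg)
  have hoff := offDiagSum_le hs hq (Nat.mul_pos (pow_pos hk n) (pow_pos hk ℓ)) (pow_pos hk ℓ)
    (s := s)
  have hoff₁ := offDiagSum_le hs hq one_pos one_pos (s := s)
  refine (abs_div_sub_le_of_le (one_le_unitSqSum hs q) (by positivity) hr
    (offDiagSum_nonneg _ _ _ _) hoff (offDiagSum_nonneg _ _ _ _) hoff₁).trans_eq ?_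
  rw [← pow_add, add_comm ℓ n, natCast_pow_rpow, natCast_pow_rpow, Nat.cast_one, Real.one_rpow]
  push_cast
  ring

end LMeasure

/-- Lemma 3.2, explicit moment form:
`|E_{s,q}[χ(k)^m conj(χ(k))^ℓ] − k^{-s|m-ℓ|}| ≤ (k^{sm} + k^{sℓ} + 2) ζ(s)² / q^s`. -/
theorem speed_of_convergence_moments (s : ℝ) (hs : 1 < s) (k : ℕ) (hk : 2 ≤ k)
    (m ℓ : ℕ) (q : ℕ) (hq : 2 ≤ q) (hcop : Nat.Coprime q k) :
    ‖((∑ χ : DirichletCharacter ℂ q,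
            ((‖Lval q s χ‖ ^ 2 : ℝ) : ℂ) *
              χ (k : ZMod q) ^ m * (starRingEnd ℂ) (χ (k : ZMod q)) ^ ℓ) /
          (∑ χ : DirichletCharacter ℂ q, ((‖Lval q s χ‖ ^ 2 : ℝ) : ℂ)) -
          (((k : ℝ) ^ (-(s * |(m : ℝ) - (ℓ : ℝ)|)) : ℝ) : ℂ))‖ ≤
      ((k : ℝ) ^ (s * m) + (k : ℝ) ^ (s * ℓ) + 2) * zetaR s ^ 2 / (q : ℝ) ^ s := by
  have : NeZero q := ⟨by omega⟩
  have hmoment (m ℓ : ℕ) : ∑ χ : DirichletCharacter ℂ q,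
      ((‖Lval q s χ‖ ^ 2 : ℝ) : ℂ) * χ (k : ZMod q) ^ m * conj (χ (k : ZMod q)) ^ ℓ =
        ((q.totient * LMeasure.congrSum s q (k ^ m) (k ^ ℓ) : ℝ) : ℂ) := by
    simpa only [Nat.cast_pow, map_pow] using
      LMeasure.sum_norm_sq_Lval_mul_apply_mul_conj hs (k ^ m) (k ^ ℓ)
  have hφ : (0 : ℝ) < q.totient := by exact_mod_cast Nat.totient_pos.mpr (by omega)
  have hmass : ∑ χ : DirichletCharacter ℂ q, ((‖Lval q s χ‖ ^ 2 : ℝ) : ℂ) =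
      ((q.totient * LMeasure.congrSum s q 1 1 : ℝ) : ℂ) := by
    simpa only [pow_zero, mul_one] using hmoment 0 0
  rw [hmoment, hmass, ← Complex.ofReal_div, ← Complex.ofReal_sub, Complex.norm_real,
    Real.norm_eq_abs, mul_div_mul_left _ _ hφ.ne', mul_div_assoc]
  exact LMeasure.abs_congrSum_div_sub_le hs (by omega) (by omega) hcop m ℓ
end
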